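/- Let α ∈ (0,2) and let U(θ,φ) = (2 cos φ)^(−α)·[1 + (cos² θ + tan² φ)^(−α/2) + (sin² θ + tan² φ)^(−α/2)] for θ ∈ ℝ and φ ∈ (−π/2, π/2) with cos² θ + tan² φ ≠ 0 and sin² θ + tan² φ ≠ 0. Then (θ,φ) is a critical point of U (both partial derivatives ∂U/∂θ and ∂U/∂φ vanish) if and only if one of the following holds for some integer k: (i) φ = 0 and θ = π/4 + kπ/2 (square configurations); (ii) φ = ±π/4 and θ = kπ/2 (rectangular prism configurations); (iii) φ = ±arctan(1/√2) and θ = π/4 + kπ/2 (tetrahedral configurations). In particular every central configuration of the dihedral 4-body problem is symmetric with respect to one of the reflections h_φ, h_θ or h'_θ. -/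

import Mathlib

/-!
With `s = sin² θ`, `c = cos² θ`, `t = tan² φ` and `q = -α/2 - 1`, the two partial derivatives
factor as
`∂θ U = -α (2 cos φ)^(-α) sin θ cos θ ((s + t)^q - (c + t)^q)` and
`∂φ U = α tan φ (2 cos φ)^(-α) (1 - s (c + t)^q - c (s + t)^q)`,
the second because `sec² φ = 1 + t` and `(c + t) - (1 + t) = -s`. Since `q ≠ 0`, the first
vanishes iff `s c = 0` or `s = c`. On `s c = 0` the bracket of the second is `1 - t^q`, on
`s = c = 1/2` it is `1 - (1/2 + t)^q`, so `t = 1` resp. `t = 1/2`; and `t = 0` excludes `s c = 0`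
because of the collision sets.
-/

open Real

/-- The dihedral 4-body potential reduced to the unit sphere, in spherical
coordinates `(θ, φ)`. -/
noncomputable def dihedralPotential (α θ φ : ℝ) : ℝ :=
  (2 * Real.cos φ) ^ (-α) *
    (1 + (Real.cos θ ^ 2 + Real.tan φ ^ 2) ^ (-(α/2)) +
      (Real.sin θ ^ 2 + Real.tan φ ^ 2) ^ (-(α/2)))

namespace Real

lemma cos_sq_eq_sin_sq_iff {θ : ℝ} :
    cos θ ^ 2 = sin θ ^ 2 ↔ ∃ k : ℤ, θ = π/4 + k * (π/2) := by
  have h : cos θ ^ 2 = sin θ ^ 2 ↔ cos (2 * θ) = 0 := by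
    rw [cos_sq', cos_two_mul, cos_sq']
    constructor <;> intro h <;> linarith
  rw [h, cos_eq_zero_iff]
  constructor <;> rintro ⟨k, hk⟩ <;> exact ⟨k, by linarith⟩

lemma sin_sq_mul_cos_sq_eq_zero_iff {θ : ℝ} :
    sin θ ^ 2 * cos θ ^ 2 = 0 ↔ ∃ k : ℤ, θ = k * (π/2) := by
  rw [← mul_pow, sq_eq_zero_iff, ← mul_right_inj' (two_ne_zero' ℝ), mul_zero, ← mul_assoc,
    ← sin_two_mul, sin_eq_zero_iff]
  constructor <;> rintro ⟨k, hk⟩ <;> exact ⟨k, by linarith⟩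

lemma tan_eq_iff_eq_arctan {φ v : ℝ} (hφ : φ ∈ Set.Ioo (-(π/2)) (π/2)) :
    tan φ = v ↔ φ = arctan v := by
  constructor
  · rintro rfl; exact (arctan_tan hφ.1 hφ.2).symm
  · rintro rfl; exact tan_arctan v

lemma tan_sq_eq_sq_iff {φ v : ℝ} (hφ : φ ∈ Set.Ioo (-(π/2)) (π/2)) :
    tan φ ^ 2 = v ^ 2 ↔ φ = arctan v ∨ φ = -arctan v := by
  rw [sq_eq_sq_iff_eq_or_eq_neg, tan_eq_iff_eq_arctan hφ, tan_eq_iff_eq_arctan hφ, arctan_neg]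

lemma tan_sq_eq_zero_iff {φ : ℝ} (hφ : φ ∈ Set.Ioo (-(π/2)) (π/2)) :
    tan φ ^ 2 = 0 ↔ φ = 0 := by
  rw [sq_eq_zero_iff, tan_eq_iff_eq_arctan hφ, arctan_zero]

lemma tan_sq_eq_one_iff {φ : ℝ} (hφ : φ ∈ Set.Ioo (-(π/2)) (π/2)) :
    tan φ ^ 2 = 1 ↔ φ = π/4 ∨ φ = -(π/4) := by
  rw [← one_pow 2, tan_sq_eq_sq_iff hφ, arctan_one]

lemma tan_sq_eq_half_iff {φ : ℝ} (hφ : φ ∈ Set.Ioo (-(π/2)) (π/2)) :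
    tan φ ^ 2 = 1/2 ↔ φ = arctan (1 / √2) ∨ φ = -arctan (1 / √2) := by
  rw [← tan_sq_eq_sq_iff hφ, div_pow, one_pow, sq_sqrt zero_le_two]

end Real

section CriticalSystem

variable {s c t q : ℝ}

lemma mul_rpow_add_mul_rpow_of_mul_eq_zero (hsc : s + c = 1) (h : s * c = 0) :
    s * (c + t) ^ q + c * (s + t) ^ q = t ^ q := by
  rcases mul_eq_zero.mp h with rfl | rfl
  · obtain rfl : c = 1 := by linarith
    simp
  · obtain rfl : s = 1 := by linarith
    simp

lemma mul_rpow_add_mul_rpow_of_eq (hsc : s + c = 1) (h : c = s) :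
    s * (c + t) ^ q + c * (s + t) ^ q = (1/2 + t) ^ q := by
  obtain rfl : s = 1/2 := by linarith
  subst h
  ring

lemma rpow_eq_one_iff_of_nonneg {x : ℝ} (hx : 0 ≤ x) (hq : q ≠ 0) : x ^ q = 1 ↔ x = 1 := by
  conv_lhs => rw [← one_rpow q]
  exact rpow_left_inj hx zero_le_one hq

lemma reduced_critical_system_iff (hsc : s + c = 1) (ht : 0 ≤ t)
    (hct : c + t ≠ 0) (hst : s + t ≠ 0) (hq : q ≠ 0) :
    ((s * c = 0 ∨ c = s) ∧ (t = 0 ∨ s * (c + t) ^ q + c * (s + t) ^ q = 1)) ↔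
      (t = 0 ∧ c = s) ∨ (t = 1 ∧ s * c = 0) ∨ (t = 1/2 ∧ c = s) := by
  constructor
  · rintro ⟨hsc0 | hcs, ht0 | hG⟩
    · rw [ht0, add_zero] at hct hst
      exact absurd hsc0 (mul_ne_zero hst hct)
    · rw [mul_rpow_add_mul_rpow_of_mul_eq_zero hsc hsc0, rpow_eq_one_iff_of_nonneg ht hq] at hG
      exact Or.inr (Or.inl ⟨hG, hsc0⟩)
    · exact Or.inl ⟨ht0, hcs⟩
    · rw [mul_rpow_add_mul_rpow_of_eq hsc hcs, rpow_eq_one_iff_of_nonneg (by positivity) hq] at hG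
      exact Or.inr (Or.inr ⟨by linarith, hcs⟩)
  · rintro (⟨ht0, hcs⟩ | ⟨rfl, hsc0⟩ | ⟨rfl, hcs⟩)
    · exact ⟨Or.inr hcs, Or.inl ht0⟩
    · refine ⟨Or.inl hsc0, Or.inr ?_⟩
      rw [mul_rpow_add_mul_rpow_of_mul_eq_zero hsc hsc0, one_rpow]
    · refine ⟨Or.inr hcs, Or.inr ?_⟩
      rw [mul_rpow_add_mul_rpow_of_eq hsc hcs]
      norm_num

end CriticalSystem

lemma hasDerivAt_dihedralPotential_theta (α θ φ : ℝ)
    (h1 : cos θ ^ 2 + tan φ ^ 2 ≠ 0) (h2 : sin θ ^ 2 + tan φ ^ 2 ≠ 0) :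
    HasDerivAt (fun θ' => dihedralPotential α θ' φ)
      (-α * (2 * cos φ) ^ (-α) * (sin θ * cos θ) *
        ((sin θ ^ 2 + tan φ ^ 2) ^ (-(α/2) - 1) - (cos θ ^ 2 + tan φ ^ 2) ^ (-(α/2) - 1))) θ := by
  have hA := (((hasDerivAt_cos θ).pow 2).add_const (tan φ ^ 2)).rpow_const (p := -(α/2)) (Or.inl h1)
  have hB := (((hasDerivAt_sin θ).pow 2).add_const (tan φ ^ 2)).rpow_const (p := -(α/2)) (Or.inl h2)
  refine (((hA.const_add 1).add hB).const_mul ((2 * cos φ) ^ (-α))).congr_deriv ?_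
  simp only [Pi.pow_apply]
  push_cast
  ring

lemma hasDerivAt_dihedralPotential_phi (α θ φ : ℝ) (hφ : cos φ ≠ 0)
    (h1 : cos θ ^ 2 + tan φ ^ 2 ≠ 0) (h2 : sin θ ^ 2 + tan φ ^ 2 ≠ 0) :
    HasDerivAt (fun φ' => dihedralPotential α θ φ')
      (α * tan φ * (2 * cos φ) ^ (-α) *
        (1 - sin θ ^ 2 * (cos θ ^ 2 + tan φ ^ 2) ^ (-(α/2) - 1) -
          cos θ ^ 2 * (sin θ ^ 2 + tan φ ^ 2) ^ (-(α/2) - 1))) φ := by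
  have hT := (hasDerivAt_tan hφ).pow 2
  have hA := (hT.const_add (cos θ ^ 2)).rpow_const (p := -(α/2)) (Or.inl h1)
  have hB := (hT.const_add (sin θ ^ 2)).rpow_const (p := -(α/2)) (Or.inl h2)
  have hC := ((hasDerivAt_cos φ).const_mul 2).rpow_const (p := -α)
    (Or.inl (mul_ne_zero two_ne_zero hφ))
  refine (hC.mul ((hA.const_add 1).add hB)).congr_deriv ?_
  have hpA : (cos θ ^ 2 + tan φ ^ 2) ^ (-(α/2)) =
      (cos θ ^ 2 + tan φ ^ 2) ^ (-(α/2) - 1) * (cos θ ^ 2 + tan φ ^ 2) := by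
    rw [← rpow_add_one h1]; ring_nf
  have hpB : (sin θ ^ 2 + tan φ ^ 2) ^ (-(α/2)) =
      (sin θ ^ 2 + tan φ ^ 2) ^ (-(α/2) - 1) * (sin θ ^ 2 + tan φ ^ 2) := by
    rw [← rpow_add_one h2]; ring_nf
  simp only [Pi.pow_apply, Pi.add_apply]
  rw [rpow_sub_one (mul_ne_zero two_ne_zero hφ), hpA, hpB]
  generalize (cos θ ^ 2 + tan φ ^ 2) ^ (-(α/2) - 1) = a
  generalize (sin θ ^ 2 + tan φ ^ 2) ^ (-(α/2) - 1) = b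
  generalize (2 * cos φ) ^ (-α) = K
  rw [tan_eq_sin_div_cos]
  push_cast
  field_simp
  linear_combination sin φ * α * K * (a + b) *
    (cos φ ^ 2 * sin_sq_add_cos_sq θ + sin_sq_add_cos_sq φ)

lemma deriv_dihedralPotential_theta_eq_zero_iff {α θ φ : ℝ} (hα : 0 < α) (hφ : 0 < cos φ)
    (h1 : cos θ ^ 2 + tan φ ^ 2 ≠ 0) (h2 : sin θ ^ 2 + tan φ ^ 2 ≠ 0) :
    deriv (fun θ' => dihedralPotential α θ' φ) θ = 0 ↔
      sin θ ^ 2 * cos θ ^ 2 = 0 ∨ cos θ ^ 2 = sin θ ^ 2 := by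
  have hK : (2 * cos φ) ^ (-α) ≠ 0 := (rpow_pos_of_pos (by positivity) _).ne'
  have hq : -(α/2) - 1 ≠ 0 := by linarith
  rw [(hasDerivAt_dihedralPotential_theta α θ φ h1 h2).deriv]
  simp only [mul_eq_zero, neg_eq_zero, hα.ne', hK, false_or, or_false, sq_eq_zero_iff,
    sub_eq_zero]
  rw [rpow_left_inj (by positivity) (by positivity) hq, add_left_inj, eq_comm (a := sin θ ^ 2)]

lemma deriv_dihedralPotential_phi_eq_zero_iff {α θ φ : ℝ} (hα : 0 < α) (hφ : 0 < cos φ)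
    (h1 : cos θ ^ 2 + tan φ ^ 2 ≠ 0) (h2 : sin θ ^ 2 + tan φ ^ 2 ≠ 0) :
    deriv (fun φ' => dihedralPotential α θ φ') φ = 0 ↔
      tan φ ^ 2 = 0 ∨
        sin θ ^ 2 * (cos θ ^ 2 + tan φ ^ 2) ^ (-(α/2) - 1) +
          cos θ ^ 2 * (sin θ ^ 2 + tan φ ^ 2) ^ (-(α/2) - 1) = 1 := by
  have hK : (2 * cos φ) ^ (-α) ≠ 0 := (rpow_pos_of_pos (by positivity) _).ne'
  rw [(hasDerivAt_dihedralPotential_phi α θ φ hφ.ne' h1 h2).deriv]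
  simp only [mul_eq_zero, hα.ne', hK, false_or, or_false, sq_eq_zero_iff, sub_sub, sub_eq_zero,
    eq_comm (a := (1 : ℝ))]

theorem dihedral_central_configurations_classification
    (α : ℝ) (hα : α ∈ Set.Ioo (0:ℝ) 2) (θ φ : ℝ)
    (hφ : φ ∈ Set.Ioo (-(π/2)) (π/2))
    (h1 : Real.cos θ ^ 2 + Real.tan φ ^ 2 ≠ 0)
    (h2 : Real.sin θ ^ 2 + Real.tan φ ^ 2 ≠ 0) :
    (deriv (fun θ' : ℝ => dihedralPotential α θ' φ) θ = 0 ∧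
     deriv (fun φ' : ℝ => dihedralPotential α θ φ') φ = 0) ↔
      ((φ = 0 ∧ ∃ k : ℤ, θ = π/4 + k * (π/2)) ∨
       ((φ = π/4 ∨ φ = -(π/4)) ∧ ∃ k : ℤ, θ = k * (π/2)) ∨
       ((φ = Real.arctan (1 / Real.sqrt 2) ∨ φ = -Real.arctan (1 / Real.sqrt 2)) ∧
         ∃ k : ℤ, θ = π/4 + k * (π/2))) := by
  have hcos : 0 < cos φ := cos_pos_of_mem_Ioo hφ
  have hq : -(α/2) - 1 ≠ 0 := by linarith [hα.1]
  rw [deriv_dihedralPotential_theta_eq_zero_iff hα.1 hcos h1 h2,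
    deriv_dihedralPotential_phi_eq_zero_iff hα.1 hcos h1 h2,
    reduced_critical_system_iff (sin_sq_add_cos_sq θ) (sq_nonneg _) h1 h2 hq,
    tan_sq_eq_zero_iff hφ, tan_sq_eq_one_iff hφ, tan_sq_eq_half_iff hφ,
    cos_sq_eq_sin_sq_iff, sin_sq_mul_cos_sq_eq_zero_iff]
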